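/- arXiv:2004.14282 — 2 statements merged into one kernel-verified Lean document; each statement's English description precedes it below -/
import Mathlib

section
/- Let ψ and ψ₁ be characteristic functions of two probability measures on ℝ, both with all moments finite, and suppose there is r > 0 such that for every t ∈ ℝ and |h| ≤ r, ψ(t+h) = ∑_{j≥0} (h^j/j!) ψ^{(j)}(t) and ψ₁(t+h) = ∑_{j≥0} (h^j/j!) ψ₁^{(j)}(t), with both series convergent. If ψ^{(j)}(0) = ψ₁^{(j)}(0) for all j ≥ 0, then ψ = ψ₁ on all of ℝ. -/
open MeasureTheory Complex

/-- If two characteristic functions of probability measures with all moments finite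
are, on every interval of radius `r > 0`, the sums of their Taylor series, and all their
derivatives coincide at `0`, then they coincide everywhere. -/
theorem charFun_eq_of_deriv_eq_at_zero
    (ρ ρ₁ : Measure ℝ) [IsProbabilityMeasure ρ] [IsProbabilityMeasure ρ₁]
    (hint : ∀ n : ℕ, Integrable (fun x => |x| ^ n) ρ)
    (hint₁ : ∀ n : ℕ, Integrable (fun x => |x| ^ n) ρ₁)
    (ψ ψ₁ : ℝ → ℂ)
    (hψ : ∀ t : ℝ, ψ t = ∫ x : ℝ, Complex.exp (I * t * x) ∂ρ)
    (hψ₁ : ∀ t : ℝ, ψ₁ t = ∫ x : ℝ, Complex.exp (I * t * x) ∂ρ₁)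
    (r : ℝ) (hr : 0 < r)
    (hser : ∀ t h : ℝ, |h| ≤ r →
      HasSum (fun j : ℕ => (h : ℂ) ^ j / (j.factorial : ℂ) * iteratedDeriv j ψ t)
        (ψ (t + h)))
    (hser₁ : ∀ t h : ℝ, |h| ≤ r →
      HasSum (fun j : ℕ => (h : ℂ) ^ j / (j.factorial : ℂ) * iteratedDeriv j ψ₁ t)
        (ψ₁ (t + h)))
    (h0 : ∀ j : ℕ, iteratedDeriv j ψ 0 = iteratedDeriv j ψ₁ 0) :
    ψ = ψ₁ := by
  -- S : set of points where all iterated derivatives agree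
  set S : Set ℝ := {t | ∀ j : ℕ, iteratedDeriv j ψ t = iteratedDeriv j ψ₁ t} with hS
  have hval : ∀ t ∈ S, ∀ h : ℝ, |h| ≤ r → ψ (t + h) = ψ₁ (t + h) := by
    intro t ht h hh
    refine HasSum.unique (hser t h hh) ?_
    have := hser₁ t h hh
    refine this.congr_fun fun j => ?_
    rw [ht j]
  have hstep : ∀ t ∈ S, ∀ h : ℝ, |h| < r → (t + h) ∈ S := by
    intro t ht h hh j
    have hev : ψ =ᶠ[nhds (t + h)] ψ₁ := by
      have hrh : 0 < r - |h| := by linarith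
      filter_upwards [Metric.ball_mem_nhds (t + h) hrh] with s hs
      have hs' : |s - t| ≤ r := by
        have h1 : |s - (t + h)| < r - |h| := by
          simpa [Real.dist_eq] using hs
        have : |s - t| ≤ |s - (t + h)| + |h| := by
          have := abs_add_le (s - (t + h)) h
          simpa [sub_add_eq_sub_sub, sub_add_cancel] using this
        linarith
      have := hval t ht (s - t) hs'
      simpa using this
    exact hev.iteratedDeriv_eq j
  have h0S : (0 : ℝ) ∈ S := h0
  -- induction: |t| ≤ n * (r/2) → t ∈ S
  have key : ∀ n : ℕ, ∀ t : ℝ, |t| ≤ n * (r / 2) → t ∈ S := by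
    intro n
    induction n with
    | zero =>
      intro t ht
      have : t = 0 := by
        have : |t| ≤ 0 := by simpa using ht
        simpa using le_antisymm this (abs_nonneg t)
      simpa [this] using h0S
    | succ n ih =>
      intro t ht
      rcases le_or_gt |t| (n * (r / 2)) with h' | h'
      · exact ih t h'
      · have hs : ((n : ℝ) * (r / 2)) ∈ S := ih _ (by
          rw [_root_.abs_of_nonneg (by positivity)])
        have hs' : (-((n : ℝ) * (r / 2))) ∈ S := ih _ (by
          rw [abs_neg, _root_.abs_of_nonneg (by positivity)])
        rcases le_or_gt 0 t with h'' | h''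
        · have habs : |t| = t := abs_of_nonneg h''
          rw [habs] at h' ht
          push_cast at ht
          have := hstep _ hs (t - n * (r / 2)) (by
            rw [_root_.abs_of_nonneg (by linarith)]; linarith)
          simpa using this
        · have habs : |t| = -t := abs_of_neg h''
          rw [habs] at h' ht
          push_cast at ht
          have := hstep _ hs' (t + n * (r / 2)) (by
            rw [_root_.abs_of_nonpos (by linarith)]; linarith)
          simpa using this
  funext t
  obtain ⟨n, hn⟩ := exists_nat_ge (|t| / (r / 2))
  have hn' : |t| ≤ n * (r / 2) := by
    rw [div_le_iff₀ (by linarith)] at hn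
    linarith
  have := key n t hn' 0
  simpa [iteratedDeriv_zero] using this
end

section
/- Let (m_n)_{n≥0} be a real sequence with m₀ = 1 and S₀ a nonempty closed subset of ℝ. Define μ on polynomials by μ(∑ x_n u^n) = ∑ x_n m_n. If μ(P) ≥ 0 for every polynomial P with P ≥ 0 on S₀, then there exists a Borel probability measure ρ on ℝ with support contained in S₀ such that m_n = ∫ u^n dρ(u) for all n ≥ 0. -/
open MeasureTheory Polynomial Filter Topology Metric
open scoped CompactlySupported

/-!
By the Riesz extension theorem, the moment functional extends from polynomials to a linear
functional `Λ` on all functions dominated on `S₀` by a polynomial, still non-negative on functions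
non-negative on `S₀`. Restricted to compactly supported continuous functions, `Λ` is represented
by the Riesz–Markov–Kakutani measure `ρ`. With bumps `χⱼ` equal to `1` on `[-j-1, j+1]`, the tail
bound `|uⁿ (1 - χⱼ)| ≤ u²ⁿ⁺² / (j+1)²` and positivity of `Λ` give `∫ uⁿ χⱼ dρ = Λ(uⁿ χⱼ) → mₙ`,
while Fatou's lemma and dominated convergence give `∫ uⁿ χⱼ dρ → ∫ uⁿ dρ`. A bump supported off
the closed set `S₀` has `Λ`-value `0`, so `ρ` vanishes near every point outside `S₀`.
-/

theorem riesz_extension_of_injective {P E : Type*} [AddCommGroup P] [Module ℝ P]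
    [AddCommGroup E] [Module ℝ E] (s : PointedCone ℝ E) (i : P →ₗ[ℝ] E)
    (hi : Function.Injective i) (φ : P →ₗ[ℝ] ℝ) (nonneg : ∀ p, i p ∈ s → 0 ≤ φ p)
    (dense : ∀ y, ∃ p, i p + y ∈ s) :
    ∃ ψ : E →ₗ[ℝ] ℝ, (∀ p, ψ (i p) = φ p) ∧ ∀ x ∈ s, 0 ≤ ψ x := by
  let e := LinearEquiv.ofInjective i hi
  have he : ∀ p, e.symm ⟨i p, p, rfl⟩ = p := fun p =>
    e.symm_apply_eq.2 (Subtype.ext (LinearEquiv.ofInjective_apply _ p).symm)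
  obtain ⟨ψ, hψφ, hψs⟩ := riesz_extension s ⟨LinearMap.range i, φ ∘ₗ e.symm.toLinearMap⟩
    (fun ⟨_, p, hp⟩ hs => by subst hp; simpa [he] using nonneg p hs)
    (fun y => let ⟨p, hp⟩ := dense y; ⟨⟨i p, p, rfl⟩, hp⟩)
  exact ⟨ψ, fun p => by simpa [he] using hψφ ⟨i p, p, rfl⟩, hψs⟩

lemma abs_le_one_add_sq (a : ℝ) : |a| ≤ 1 + a ^ 2 := by
  nlinarith [sq_nonneg (|a| - 1), sq_abs a]

lemma abs_pow_le_pow_div_sq {r u : ℝ} (hr : 1 ≤ r) (hru : r ≤ |u|) (n : ℕ) :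
    |u| ^ n ≤ u ^ (2 * n + 2) / r ^ 2 := by
  have hu : 1 ≤ |u| := hr.trans hru
  have h2 : r ^ 2 ≤ |u| ^ (n + 2) :=
    (pow_le_pow_left₀ (by linarith) hru 2).trans (pow_le_pow_right₀ hu (by omega))
  rw [le_div_iff₀ (by positivity)]
  calc |u| ^ n * r ^ 2 ≤ |u| ^ n * |u| ^ (n + 2) := by gcongr
    _ = |u| ^ (2 * n + 2) := by ring
    _ = u ^ (2 * n + 2) := Even.pow_abs ⟨n + 1, by ring⟩ u

noncomputable def ContDiffBump.toCompactlySupported {E : Type*} [NormedAddCommGroup E]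
    [NormedSpace ℝ E] [FiniteDimensional ℝ E] [HasContDiffBump E] {c : E} (b : ContDiffBump c) :
    C_c(E, ℝ) :=
  ⟨⟨b, b.continuous⟩, b.hasCompactSupport⟩

namespace MomentProblem

noncomputable def momentFunctional (m : ℕ → ℝ) : ℝ[X] →ₗ[ℝ] ℝ :=
  lsum fun n => LinearMap.mulRight ℝ (m n)

lemma momentFunctional_apply (m : ℕ → ℝ) (p : ℝ[X]) :
    momentFunctional m p = p.sum fun n c => c * m n :=
  lsum_apply _ _

@[simp]
lemma momentFunctional_X_pow (m : ℕ → ℝ) (n : ℕ) : momentFunctional m (X ^ n) = m n := by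
  simp [momentFunctional, ← monomial_one_right_eq_X_pow]

variable (S : Set ℝ)

def polyDominated : Submodule ℝ (ℝ → ℝ) where
  carrier := {f | ∃ q : ℝ[X], ∀ u ∈ S, |f u| ≤ q.eval u}
  zero_mem' := ⟨0, by simp⟩
  add_mem' := by
    rintro f g ⟨q, hq⟩ ⟨r, hr⟩
    exact ⟨q + r, fun u hu =>
      (abs_add_le _ _).trans (by simpa using add_le_add (hq u hu) (hr u hu))⟩
  smul_mem' := by
    rintro c f ⟨q, hq⟩
    exact ⟨C |c| * q, fun u hu => by
      simpa [abs_mul] using mul_le_mul_of_nonneg_left (hq u hu) (abs_nonneg c)⟩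

def nonnegOn : PointedCone ℝ (polyDominated S) where
  carrier := {f | ∀ u ∈ S, 0 ≤ (f : ℝ → ℝ) u}
  zero_mem' _ _ := le_rfl
  add_mem' hf hg u hu := add_nonneg (hf u hu) (hg u hu)
  smul_mem' c _ hf u hu := mul_nonneg c.2 (hf u hu)

noncomputable def ofPoly : ℝ[X] →ₗ[ℝ] polyDominated S :=
  LinearMap.codRestrict _ (LinearMap.pi fun u => leval u) fun p =>
    ⟨1 + p ^ 2, fun u _ => by simpa using abs_le_one_add_sq (p.eval u)⟩

def ofCompactlySupported : C_c(ℝ, ℝ) →ₗ[ℝ] polyDominated S where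
  toFun f := ⟨f,
    let ⟨c, hc⟩ := f.continuous.bounded_above_of_compact_support f.hasCompactSupport
    ⟨C c, fun u _ => by simpa using hc u⟩⟩
  map_add' _ _ := rfl
  map_smul' _ _ := rfl

@[simp]
lemma coe_ofPoly (p : ℝ[X]) : (ofPoly S p : ℝ → ℝ) = fun u => p.eval u := rfl

@[simp]
lemma coe_ofCompactlySupported (f : C_c(ℝ, ℝ)) : (ofCompactlySupported S f : ℝ → ℝ) = f := rfl

theorem exists_nonneg_extension {m : ℕ → ℝ}
    (hpos : ∀ p : ℝ[X], (∀ u ∈ S, 0 ≤ p.eval u) → 0 ≤ momentFunctional m p) :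
    ∃ Λ : polyDominated S →ₗ[ℝ] ℝ, (∀ p, Λ (ofPoly S p) = momentFunctional m p) ∧
      ∀ f ∈ nonnegOn S, 0 ≤ Λ f :=
  riesz_extension_of_injective (nonnegOn S) (ofPoly S)
    (fun _ _ h => Polynomial.funext fun u => congr_fun (congrArg Subtype.val h) u) _ hpos
    (fun f => let ⟨q, hq⟩ := f.2; ⟨q, fun u hu => show 0 ≤ q.eval u + (f : ℝ → ℝ) u by
      linarith [neg_abs_le ((f : ℝ → ℝ) u), hq u hu]⟩)

def cutoffBump (j : ℕ) : ContDiffBump (0 : ℝ) :=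
  ⟨j + 1, j + 2, by positivity, by linarith⟩

noncomputable def cutoff (j : ℕ) : C_c(ℝ, ℝ) := (cutoffBump j).toCompactlySupported

lemma cutoff_nonneg (j : ℕ) (u : ℝ) : 0 ≤ cutoff j u := (cutoffBump j).nonneg

lemma cutoff_le_one (j : ℕ) (u : ℝ) : cutoff j u ≤ 1 := (cutoffBump j).le_one

lemma cutoff_eq_one {j : ℕ} {u : ℝ} (hu : |u| ≤ j + 1) : cutoff j u = 1 :=
  (cutoffBump j).one_of_mem_closedBall (by simpa [cutoffBump] using hu)

lemma eventually_cutoff_eq_one (u : ℝ) : ∀ᶠ j in atTop, cutoff j u = 1 := by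
  obtain ⟨j₀, hj₀⟩ := exists_nat_ge |u|
  filter_upwards [eventually_ge_atTop j₀] with j hj
  exact cutoff_eq_one (by linarith [(Nat.cast_le (α := ℝ)).2 hj])

lemma abs_pow_mul_one_sub_cutoff_le (n j : ℕ) (u : ℝ) :
    |u ^ n * (1 - cutoff j u)| ≤ u ^ (2 * n + 2) / (j + 1) ^ 2 := by
  rcases le_or_gt |u| (j + 1) with hu | hu
  · rw [cutoff_eq_one hu, sub_self, mul_zero, abs_zero]
    exact div_nonneg ((show Even (2 * n + 2) from ⟨n + 1, by ring⟩).pow_nonneg u) (by positivity)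
  · rw [abs_mul, abs_pow, abs_of_nonneg (sub_nonneg.2 (cutoff_le_one j u))]
    calc |u| ^ n * (1 - cutoff j u) ≤ |u| ^ n :=
          mul_le_of_le_one_right (by positivity) (by linarith [cutoff_nonneg j u])
      _ ≤ u ^ (2 * n + 2) / (j + 1) ^ 2 :=
          abs_pow_le_pow_div_sq (by linarith [j.cast_nonneg (α := ℝ)]) hu.le n

variable {S} {Λ : polyDominated S →ₗ[ℝ] ℝ}

lemma map_le_map_of_le_on (hΛ : ∀ f ∈ nonnegOn S, 0 ≤ Λ f) {f g : polyDominated S}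
    (h : ∀ u ∈ S, (f : ℝ → ℝ) u ≤ (g : ℝ → ℝ) u) : Λ f ≤ Λ g := by
  have := hΛ (g - f) fun u hu => sub_nonneg.2 (h u hu)
  rwa [map_sub, sub_nonneg] at this

lemma abs_map_sub_le_of_abs_sub_le_on (hΛ : ∀ f ∈ nonnegOn S, 0 ≤ Λ f)
    {f g h : polyDominated S} (hfg : ∀ u ∈ S, |(f : ℝ → ℝ) u - (g : ℝ → ℝ) u| ≤ (h : ℝ → ℝ) u) :
    |Λ f - Λ g| ≤ Λ h := by
  rw [← map_sub, abs_le, neg_le, ← map_neg]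
  constructor <;> refine map_le_map_of_le_on hΛ fun u hu => ?_
  · exact neg_le.1 (abs_le.1 (hfg u hu)).1
  · exact (abs_le.1 (hfg u hu)).2

noncomputable def restrictCompactlySupported (hΛ : ∀ f ∈ nonnegOn S, 0 ≤ Λ f) :
    C_c(ℝ, ℝ) →ₚ[ℝ] ℝ :=
  PositiveLinearMap.mk₀ (Λ ∘ₗ ofCompactlySupported S) fun _ hf => hΛ _ fun u _ => hf u

@[simp]
lemma restrictCompactlySupported_apply (hΛ : ∀ f ∈ nonnegOn S, 0 ≤ Λ f) (f : C_c(ℝ, ℝ)) :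
    restrictCompactlySupported hΛ f = Λ (ofCompactlySupported S f) := rfl

lemma map_eq_zero_of_eq_zero_on (hΛ : ∀ f ∈ nonnegOn S, 0 ≤ Λ f) {f : polyDominated S}
    (h : ∀ u ∈ S, (f : ℝ → ℝ) u = 0) : Λ f = 0 :=
  le_antisymm (by simpa using map_le_map_of_le_on hΛ (g := 0) fun u hu => (h u hu).le)
    (hΛ f fun u hu => (h u hu).ge)

variable (hΛ : ∀ f ∈ nonnegOn S, 0 ≤ Λ f) {m : ℕ → ℝ}

noncomputable abbrev momentMeasure : Measure ℝ :=
  RealRMK.rieszMeasure (restrictCompactlySupported hΛ)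

lemma integral_eval_mul_cutoff (p : ℝ[X]) (j : ℕ) :
    ∫ u, p.eval u * cutoff j u ∂momentMeasure hΛ =
      Λ (ofCompactlySupported S (p.toContinuousMap • cutoff j)) :=
  RealRMK.integral_rieszMeasure (restrictCompactlySupported hΛ) (p.toContinuousMap • cutoff j)

lemma integral_eval_mul_cutoff_le (hΛm : ∀ p, Λ (ofPoly S p) = momentFunctional m p) {p : ℝ[X]}
    (hp : ∀ u ∈ S, 0 ≤ p.eval u) (j : ℕ) :
    ∫ u, p.eval u * cutoff j u ∂momentMeasure hΛ ≤ momentFunctional m p := by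
  rw [integral_eval_mul_cutoff, ← hΛm]
  exact map_le_map_of_le_on hΛ fun u hu => mul_le_of_le_one_right (hp u hu) (cutoff_le_one j u)

lemma abs_sub_integral_pow_mul_cutoff_le (hΛm : ∀ p, Λ (ofPoly S p) = momentFunctional m p)
    (n j : ℕ) :
    |m n - ∫ u, u ^ n * cutoff j u ∂momentMeasure hΛ| ≤ m (2 * n + 2) / (j + 1) ^ 2 := by
  have h := abs_map_sub_le_of_abs_sub_le_on hΛ (f := ofPoly S (X ^ n))
    (g := ofCompactlySupported S ((X ^ n : ℝ[X]).toContinuousMap • cutoff j))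
    (h := (((j : ℝ) + 1) ^ 2)⁻¹ • ofPoly S (X ^ (2 * n + 2))) fun u _ => by
      simpa [mul_one_sub, div_eq_inv_mul] using abs_pow_mul_one_sub_cutoff_le n j u
  simpa [hΛm, ← integral_eval_mul_cutoff hΛ, div_eq_inv_mul] using h

lemma integrable_eval (hΛm : ∀ p, Λ (ofPoly S p) = momentFunctional m p) {p : ℝ[X]}
    (hp : ∀ u, 0 ≤ p.eval u) :
    Integrable (fun u => p.eval u) (momentMeasure hΛ) := by
  refine integrable_of_tendsto (G := fun j u => p.eval u * cutoff j u)
    (ae_of_all _ fun u => tendsto_nhds_of_eventually_eq ?_)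
    (fun j => (p.continuous.mul (cutoff j).continuous).aestronglyMeasurable)
    (ne_top_of_le_ne_top (ENNReal.ofReal_ne_top (r := momentFunctional m p))
      (liminf_le_of_frequently_le' (Frequently.of_forall fun j => ?_)))
  · filter_upwards [eventually_cutoff_eq_one u] with j hj
    rw [hj, mul_one]
  · have hG : ∀ u, 0 ≤ p.eval u * cutoff j u := fun u => mul_nonneg (hp u) (cutoff_nonneg j u)
    calc ∫⁻ u, ‖p.eval u * cutoff j u‖ₑ ∂momentMeasure hΛ
        = ∫⁻ u, ENNReal.ofReal (p.eval u * cutoff j u) ∂momentMeasure hΛ :=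
          lintegral_congr fun u => Real.enorm_eq_ofReal (hG u)
      _ = ENNReal.ofReal (∫ u, p.eval u * cutoff j u ∂momentMeasure hΛ) :=
          (ofReal_integral_eq_lintegral_ofReal (p.toContinuousMap • cutoff j).integrable
            (ae_of_all _ hG)).symm
      _ ≤ ENNReal.ofReal (momentFunctional m p) :=
          ENNReal.ofReal_le_ofReal (integral_eval_mul_cutoff_le hΛ hΛm (fun u _ => hp u) j)

lemma integrable_pow (hΛm : ∀ p, Λ (ofPoly S p) = momentFunctional m p) (n : ℕ) :
    Integrable (fun u => u ^ n) (momentMeasure hΛ) :=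
  (integrable_eval hΛ hΛm (p := 1 + X ^ (2 * n)) fun u => by
    simp only [eval_add, eval_one, eval_pow, eval_X, pow_mul]; positivity).mono'
    (continuous_pow n).aestronglyMeasurable
    (ae_of_all _ fun u => by simpa [pow_mul'] using abs_le_one_add_sq (u ^ n))

lemma integral_pow (hΛm : ∀ p, Λ (ofPoly S p) = momentFunctional m p) (n : ℕ) :
    ∫ u, u ^ n ∂momentMeasure hΛ = m n := by
  refine tendsto_nhds_unique (l := atTop)
    (f := fun j : ℕ => ∫ u, u ^ n * cutoff j u ∂momentMeasure hΛ) ?_ ?_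
  · refine tendsto_integral_of_dominated_convergence (fun u => ‖u ^ n‖)
      (fun j => ((continuous_pow n).mul (cutoff j).continuous).aestronglyMeasurable)
      (integrable_pow hΛ hΛm n).norm (fun j => ae_of_all _ fun u => ?_)
      (ae_of_all _ fun u => tendsto_nhds_of_eventually_eq ?_)
    · rw [norm_mul, Real.norm_of_nonneg (cutoff_nonneg j u)]
      exact mul_le_of_le_one_right (norm_nonneg _) (cutoff_le_one j u)
    · filter_upwards [eventually_cutoff_eq_one u] with j hj
      rw [hj, mul_one]
  · have hbound : Tendsto (fun j : ℕ => m (2 * n + 2) / ((j : ℝ) + 1) ^ 2) atTop (𝓝 0) :=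
      tendsto_const_nhds.div_atTop ((tendsto_pow_atTop two_ne_zero).comp
        (tendsto_atTop_add_const_right atTop (1 : ℝ) tendsto_natCast_atTop_atTop))
    rw [tendsto_iff_dist_tendsto_zero]
    refine squeeze_zero (fun _ => dist_nonneg) (fun j => ?_) hbound
    rw [Real.dist_eq, abs_sub_comm]
    exact abs_sub_integral_pow_mul_cutoff_le hΛ hΛm n j

lemma isProbabilityMeasure_momentMeasure (hΛm : ∀ p, Λ (ofPoly S p) = momentFunctional m p)
    (hm0 : m 0 = 1) : IsProbabilityMeasure (momentMeasure hΛ) :=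
  isProbabilityMeasure_iff_real.2 (by simpa [hm0] using integral_pow hΛ hΛm 0)

lemma momentMeasure_support_subset (hS : IsClosed S) :
    {x | ∀ U ∈ 𝓝 x, 0 < momentMeasure hΛ U} ⊆ S := by
  intro x hx
  by_contra hxS
  obtain ⟨r, hr, hball⟩ := Metric.isOpen_iff.1 hS.isOpen_compl x hxS
  let b : ContDiffBump x := ⟨r / 2, r, half_pos hr, half_lt_self hr⟩
  have hb : Λ (ofCompactlySupported S b.toCompactlySupported) = 0 :=
    map_eq_zero_of_eq_zero_on hΛ fun u hu =>
      Function.notMem_support.1 fun h => hball (b.support_eq ▸ h) hu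
  have hK := RealRMK.rieszMeasure_le_of_eq_one (restrictCompactlySupported hΛ)
    (f := b.toCompactlySupported) (fun _ => b.nonneg) (isCompact_closedBall x (r / 2))
    fun _ hu => b.one_of_mem_closedBall hu
  rw [restrictCompactlySupported_apply, hb, ENNReal.ofReal_zero, nonpos_iff_eq_zero] at hK
  exact (hx _ (closedBall_mem_nhds x (half_pos hr))).ne' hK

end MomentProblem

open MomentProblem in
theorem measure_of_moment_functional_nonneg_general
    (m : ℕ → ℝ) (hm0 : m 0 = 1)
    (S₀ : Set ℝ) (hS₀closed : IsClosed S₀)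
    (hpos : ∀ P : Polynomial ℝ, (∀ u ∈ S₀, 0 ≤ P.eval u) →
      0 ≤ P.sum (fun n c => c * m n)) :
    ∃ ρ : Measure ℝ, IsProbabilityMeasure ρ ∧
      {x : ℝ | ∀ U ∈ nhds x, 0 < ρ U} ⊆ S₀ ∧
      (∀ n : ℕ, Integrable (fun u => u ^ n) ρ) ∧
      (∀ n : ℕ, m n = ∫ u, u ^ n ∂ρ) := by
  obtain ⟨Λ, hΛm, hΛ⟩ := exists_nonneg_extension S₀ (by simpa only [momentFunctional_apply])
  exact ⟨momentMeasure hΛ, isProbabilityMeasure_momentMeasure hΛ hΛm hm0,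
    momentMeasure_support_subset hΛ hS₀closed, integrable_pow hΛ hΛm,
    fun n => (integral_pow hΛ hΛm n).symm⟩

/-- Sufficiency in the Shohat–Tamarkin theorem: if the moment functional
`μ(P) = ∑ xₙ mₙ` is non-negative on every polynomial non-negative on the nonempty
closed set `S₀`, then `(mₙ)` is the moment sequence of a probability measure with
support contained in `S₀`. -/
theorem measure_of_moment_functional_nonneg
    (m : ℕ → ℝ) (hm0 : m 0 = 1)
    (S₀ : Set ℝ) (hS₀closed : IsClosed S₀) (hS₀ne : S₀.Nonempty)
    (hpos : ∀ P : Polynomial ℝ, (∀ u ∈ S₀, 0 ≤ P.eval u) →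
      0 ≤ P.sum (fun n c => c * m n)) :
    ∃ ρ : Measure ℝ, IsProbabilityMeasure ρ ∧
      {x : ℝ | ∀ U ∈ nhds x, 0 < ρ U} ⊆ S₀ ∧
      (∀ n : ℕ, Integrable (fun u => u ^ n) ρ) ∧
      (∀ n : ℕ, m n = ∫ u, u ^ n ∂ρ) :=
  measure_of_moment_functional_nonneg_general m hm0 S₀ hS₀closed hpos
end
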